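/- arXiv:1401.0882 — 2 statements merged into one kernel-verified Lean document; each statement's English description precedes it below -/
import Mathlib

section
/- Every Steinitz-Rademacher polyhedron of cardinality 6 has exactly 2 vertices, exactly 2 edges, and exactly 2 faces. -/
/-!
The three sorts partition the polyhedron, and each sort has at least two elements: an edge has
two vertices and two faces, and a vertex–face flag through that edge lies on two edges. Six
elements split into three parts of size at least two therefore leave exactly two of each.
-/

/-- A Steinitz-Rademacher polyhedron structure on a type `P` with
vertex/edge/face predicates `V`, `E`, `F` and incidence relation `I`. -/
structure IsSR {P : Type*} (V E F : P → Prop) (I : P → P → Prop) : Prop where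
  exV : ∃ x, V x
  exE : ∃ x, E x
  exF : ∃ x, F x
  cover : ∀ x, V x ∨ E x ∨ F x
  symm : ∀ x y, I x y → I y x
  noVV : ∀ x y, V x → V y → ¬ I x y
  noEE : ∀ x y, E x → E y → ¬ I x y
  noFF : ∀ x y, F x → F y → ¬ I x y
  trans : ∀ v e f, V v → E e → F f → I v e → I e f → I v f
  edgeV : ∀ e, E e → ∃ v₁ v₂, v₁ ≠ v₂ ∧ V v₁ ∧ V v₂ ∧ I e v₁ ∧ I e v₂ ∧
    ∀ v, V v → I e v → v = v₁ ∨ v = v₂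
  edgeF : ∀ e, E e → ∃ f₁ f₂, f₁ ≠ f₂ ∧ F f₁ ∧ F f₂ ∧ I e f₁ ∧ I e f₂ ∧
    ∀ f, F f → I e f → f = f₁ ∨ f = f₂
  vfE : ∀ v f, V v → F f → I v f → ∃ e₁ e₂, e₁ ≠ e₂ ∧ E e₁ ∧ E e₂ ∧
    I v e₁ ∧ I e₁ f ∧ I v e₂ ∧ I e₂ f ∧
    ∀ e, E e → I v e → I e f → e = e₁ ∨ e = e₂
  vInc : ∀ v, V v → ∃ x, x ≠ v ∧ I v x
  fInc : ∀ f, F f → ∃ x, x ≠ f ∧ I f x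

theorem Nat.card_subtype_add_card_subtype_add_card_subtype {α : Type*} [Finite α]
    (p q r : α → Prop) (hcover : ∀ x, p x ∨ q x ∨ r x) (hpq : ∀ x, p x → ¬ q x)
    (hpr : ∀ x, p x → ¬ r x) (hqr : ∀ x, q x → ¬ r x) :
    Nat.card {x // p x} + Nat.card {x // q x} + Nat.card {x // r x} = Nat.card α := by
  have hunion : {x | p x} ∪ ({x | q x} ∪ {x | r x}) = Set.univ := by
    ext x
    simpa using hcover x
  have hdisj_qr : Disjoint {x | q x} {x | r x} := Set.disjoint_left.mpr hqr
  have hdisj_p : Disjoint {x | p x} ({x | q x} ∪ {x | r x}) :=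
    Set.disjoint_left.mpr fun x hp hx ↦ hx.elim (hpq x hp) (hpr x hp)
  rw [← Set.ncard_univ α, ← hunion, Set.ncard_union_eq hdisj_p, Set.ncard_union_eq hdisj_qr,
    ← add_assoc]
  rfl

namespace IsSR

variable {P : Type*} {V E F : P → Prop} {I : P → P → Prop}

theorem not_vertex_of_edge (h : IsSR V E F I) {x : P} (hE : E x) : ¬ V x := fun hV ↦ by
  obtain ⟨v, -, -, hv, -, hxv, -⟩ := h.edgeV x hE
  exact h.noVV x v hV hv hxv

theorem not_face_of_edge (h : IsSR V E F I) {x : P} (hE : E x) : ¬ F x := fun hF ↦ by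
  obtain ⟨f, -, -, hf, -, hxf, -⟩ := h.edgeF x hE
  exact h.noFF x f hF hf hxf

theorem not_face_of_vertex (h : IsSR V E F I) {x : P} (hV : V x) : ¬ F x := fun hF ↦ by
  obtain ⟨y, -, hxy⟩ := h.vInc x hV
  rcases h.cover y with hy | hy | hy
  · exact h.noVV x y hV hy hxy
  · obtain ⟨f, -, -, hf, -, hyf, -⟩ := h.edgeF y hy
    exact h.noFF x f hF hf (h.trans x y f hV hy hf hxy hyf)
  · exact h.noFF x y hF hy hxy

theorem nontrivial_vertex (h : IsSR V E F I) : Nontrivial {x // V x} := by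
  obtain ⟨e, he⟩ := h.exE
  obtain ⟨v₁, v₂, hne, hv₁, hv₂, -⟩ := h.edgeV e he
  exact ⟨⟨v₁, hv₁⟩, ⟨v₂, hv₂⟩, by simpa using hne⟩

theorem nontrivial_face (h : IsSR V E F I) : Nontrivial {x // F x} := by
  obtain ⟨e, he⟩ := h.exE
  obtain ⟨f₁, f₂, hne, hf₁, hf₂, -⟩ := h.edgeF e he
  exact ⟨⟨f₁, hf₁⟩, ⟨f₂, hf₂⟩, by simpa using hne⟩

theorem nontrivial_edge (h : IsSR V E F I) : Nontrivial {x // E x} := by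
  obtain ⟨e, he⟩ := h.exE
  obtain ⟨v, -, -, hv, -, hev, -⟩ := h.edgeV e he
  obtain ⟨f, -, -, hf, -, hef, -⟩ := h.edgeF e he
  have hvf : I v f := h.trans v e f hv he hf (h.symm e v hev) hef
  obtain ⟨e₁, e₂, hne, he₁, he₂, -⟩ := h.vfE v f hv hf hvf
  exact ⟨⟨e₁, he₁⟩, ⟨e₂, he₂⟩, by simpa using hne⟩

theorem card_vertex_add_card_edge_add_card_face [Finite P] (h : IsSR V E F I) :
    Nat.card {x // V x} + Nat.card {x // E x} + Nat.card {x // F x} = Nat.card P :=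
  Nat.card_subtype_add_card_subtype_add_card_subtype V E F h.cover
    (fun _ hV hE ↦ h.not_vertex_of_edge hE hV) (fun _ ↦ h.not_face_of_vertex)
    (fun _ ↦ h.not_face_of_edge)

end IsSR

theorem sr_card_six_counts (P : Type) (V E F : P → Prop) (I : P → P → Prop)
    (h : IsSR V E F I) (hcard : Nat.card P = 6) :
    Nat.card {x // V x} = 2 ∧ Nat.card {x // E x} = 2 ∧
      Nat.card {x // F x} = 2 := by
  have : Finite P := Nat.finite_of_card_ne_zero (by omega)
  have := h.nontrivial_vertex
  have := h.nontrivial_edge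
  have := h.nontrivial_face
  have hV := Finite.one_lt_card (α := {x // V x})
  have hE := Finite.one_lt_card (α := {x // E x})
  have hF := Finite.one_lt_card (α := {x // F x})
  have hsum := h.card_vertex_add_card_edge_add_card_face
  omega
end

section
/- There is no extensional Steinitz-Rademacher polyhedron with exactly 2 vertices, 2 edges, and 2 faces. -/
/-! Each edge is incident with two distinct vertices and two distinct faces; when there are only
two of each, it is therefore incident with all of them, and with no edge. So the two edges have
the same incidences, and extensionality identifies them. -/

lemma eq_or_eq_of_card_subtype_eq_two {P : Type*} {Q : P → Prop} (hQ : Nat.card {x // Q x} = 2)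
    {a b c : P} (hab : a ≠ b) (ha : Q a) (hb : Q b) (hc : Q c) : c = a ∨ c = b := by
  obtain ⟨x, y, -, huniv⟩ := Nat.card_eq_two_iff.mp hQ
  have hxy : ∀ z (hz : Q z), z = x.1 ∨ z = y.1 := fun z hz => by
    have hz' : (⟨z, hz⟩ : {x // Q x}) ∈ ({x, y} : Set {x // Q x}) := huniv ▸ trivial
    rcases hz' with rfl | rfl <;> simp
  grind

namespace IsSR

variable {P : Type*} {V E F : P → Prop} {I : P → P → Prop}

theorem incident_vertex_of_card_eq_two (h : IsSR V E F I) (hV : Nat.card {x // V x} = 2)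
    {e v : P} (he : E e) (hv : V v) : I e v := by
  obtain ⟨v₁, v₂, hne, hv₁, hv₂, hi₁, hi₂, -⟩ := h.edgeV e he
  rcases eq_or_eq_of_card_subtype_eq_two hV hne hv₁ hv₂ hv with rfl | rfl
  exacts [hi₁, hi₂]

theorem incident_face_of_card_eq_two (h : IsSR V E F I) (hF : Nat.card {x // F x} = 2)
    {e f : P} (he : E e) (hf : F f) : I e f := by
  obtain ⟨f₁, f₂, hne, hf₁, hf₂, hi₁, hi₂, -⟩ := h.edgeF e he
  rcases eq_or_eq_of_card_subtype_eq_two hF hne hf₁ hf₂ hf with rfl | rfl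
  exacts [hi₁, hi₂]

theorem incident_edge_iff_of_card_eq_two (h : IsSR V E F I) (hV : Nat.card {x // V x} = 2)
    (hF : Nat.card {x // F x} = 2) {e e' : P} (he : E e) (he' : E e') (x : P) :
    I e x ↔ I e' x := by
  rcases h.cover x with hx | hx | hx
  · exact iff_of_true (h.incident_vertex_of_card_eq_two hV he hx)
      (h.incident_vertex_of_card_eq_two hV he' hx)
  · exact iff_of_false (h.noEE e x he hx) (h.noEE e' x he' hx)
  · exact iff_of_true (h.incident_face_of_card_eq_two hF he hx)
      (h.incident_face_of_card_eq_two hF he' hx)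

end IsSR

theorem no_extensional_sr_222 (P : Type) (V E F : P → Prop) (I : P → P → Prop)
    (h : IsSR V E F I)
    (hext : ∀ p q : P, (∀ x, I p x ↔ I q x) → p = q)
    (hV : Nat.card {x // V x} = 2) (hE : Nat.card {x // E x} = 2)
    (hF : Nat.card {x // F x} = 2) : False := by
  obtain ⟨⟨e, he⟩, ⟨e', he'⟩, hne, -⟩ := Nat.card_eq_two_iff.mp hE
  exact hne (Subtype.ext (hext e e' (h.incident_edge_iff_of_card_eq_two hV hF he he')))
end
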